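/- Let 1 < p < ∞, let N ≥ 0 be an integer, let f be a polynomial of degree at most N, and let g ∈ A^p. Then 𝒫(f · conj(g)) is a polynomial of degree at most N. -/

import Mathlib

open MeasureTheory Complex Metric

/-- Normalized area measure on the unit disc: Lebesgue measure restricted to
the unit disc, normalized so that the disc has measure 1. -/
noncomputable def σA : Measure ℂ :=
  (ENNReal.ofReal Real.pi)⁻¹ • (volume.restrict (ball (0:ℂ) 1))

/-- The Bergman projection of an integrable function on the unit disc. -/
noncomputable def bergmanProj (g : ℂ → ℂ) : ℂ → ℂ :=
  fun z => ∫ ζ, g ζ / (1 - (starRingEnd ℂ) ζ * z) ^ 2 ∂σA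

/-- Membership in the Bergman space `A^p`: analytic on the unit disc with
`∫ |f|^p dσ < ∞`. -/
def MemAp (p : ℝ) (f : ℂ → ℂ) : Prop :=
  DifferentiableOn ℂ f (ball (0:ℂ) 1) ∧
  Integrable (fun z => ‖f z‖ ^ p) σA

/-- The `A^p` norm `(∫ |f|^p dσ)^(1/p)`. -/
noncomputable def apNorm (p : ℝ) (f : ℂ → ℂ) : ℝ :=
  (∫ z, ‖f z‖ ^ p ∂σA) ^ (1/p)

/-- `sgn w = w / |w|` for `w ≠ 0`, and `sgn 0 = 0`. -/
noncomputable def csgn (w : ℂ) : ℂ := if w = 0 then 0 else w / ‖w‖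

/-- The function `|F|^{p-1} sgn F`. -/
noncomputable def modPow (p : ℝ) (F : ℂ → ℂ) : ℂ → ℂ :=
  fun z => ((‖F z‖ ^ (p - 1) : ℝ) : ℂ) * csgn (F z)

/-!
Expanding the Bergman kernel as `(1 - conj ζ * w)⁻² = ∑ (n + 1) (conj ζ)ⁿ wⁿ` and integrating
termwise gives `𝒫(f conj g)(w) = ∑ (n + 1) wⁿ ∫ f conj g (conj ζ)ⁿ dσ`. Conjugating, the `n`-th
moment is a combination of the integrals `∫ (conj ζ)ʲ ζⁿ g dσ` with `j ≤ deg f`. For `j < n` these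
vanish: in polar coordinates, on the circle `|ζ| = r` the integrand equals `r²ʲ ζⁿ⁻ʲ g(ζ)`, a
holomorphic function vanishing at `0`, whose circle average is `0` by the mean value property.
Hence only the moments with `n ≤ N` survive. Integrability of `g` comes from `A^p ⊆ A^1`.
-/

open Set

theorem Complex.polarCoord_symm_eq_circleMap (p : ℝ × ℝ) :
    Complex.polarCoord.symm p = circleMap 0 p.1 p.2 := by
  simp [circleMap, Complex.exp_mul_I, mul_add]

theorem Complex.integrableOn_polarCoord_target {E : Type*} [NormedAddCommGroup E]
    [NormedSpace ℝ E] {Φ : ℂ → E} (hm : StronglyMeasurable Φ) (hΦ : Integrable Φ) :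
    IntegrableOn (fun p : ℝ × ℝ => p.1 • Φ (Complex.polarCoord.symm p)) polarCoord.target := by
  have hsymm : Measurable Complex.polarCoord.symm :=
    measurableEquivRealProd.symm.measurable.comp continuous_polarCoord_symm.measurable
  refine ⟨(continuous_fst.stronglyMeasurable.smul
    (hm.comp_measurable hsymm)).aestronglyMeasurable, ?_⟩
  have hnorm : ∀ p ∈ polarCoord.target, ‖p.1 • Φ (Complex.polarCoord.symm p)‖ₑ
      = ENNReal.ofReal p.1 • ‖Φ (Complex.polarCoord.symm p)‖ₑ := fun p hp => by
    rw [enorm_smul, Real.enorm_of_nonneg (le_of_lt hp.1), smul_eq_mul]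
  rw [HasFiniteIntegral, setLIntegral_congr_fun polarCoord.open_target.measurableSet hnorm]
  exact (Complex.lintegral_comp_polarCoord_symm fun z => ‖Φ z‖ₑ).trans_lt hΦ.hasFiniteIntegral

theorem integral_Ioo_neg_pi_pi_circleMap {E : Type*} [NormedAddCommGroup E] [NormedSpace ℝ E]
    (f : ℂ → E) (c : ℂ) (R : ℝ) :
    ∫ θ in Ioo (-Real.pi) Real.pi, f (circleMap c R θ) =
      (2 * Real.pi) • Real.circleAverage f c R := by
  have hper : Function.Periodic (fun θ => f (circleMap c R θ)) (2 * Real.pi) :=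
    (periodic_circleMap c R).comp f
  rw [Real.circleAverage_def, smul_smul, mul_inv_cancel₀ (by positivity), one_smul,
    ← integral_Ioc_eq_integral_Ioo, ← intervalIntegral.integral_of_le (by linarith [Real.pi_pos]),
    ← zero_add (2 * Real.pi), hper.intervalIntegral_add_eq 0 (-Real.pi)]
  ring_nf

theorem circleAverage_conj_pow_mul_pow_mul_eq_zero {h : ℂ → ℂ} {r : ℝ}
    (hd : DiffContOnCl ℂ h (ball 0 |r|)) {j n : ℕ} (hjn : j < n) :
    Real.circleAverage (fun z => (starRingEnd ℂ) z ^ j * z ^ n * h z) 0 r = 0 := by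
  have hsphere : EqOn (fun z => (starRingEnd ℂ) z ^ j * z ^ n * h z)
      (fun z => ((r ^ 2 : ℝ) : ℂ) ^ j * z ^ (n - j) * h z) (sphere 0 |r|) := fun z hz => by
    have hzz : (starRingEnd ℂ) z * z = ((r ^ 2 : ℝ) : ℂ) := by
      rw [mul_comm, mul_conj, ← sq_abs r, ← mem_sphere_zero_iff_norm.mp hz, normSq_eq_norm_sq]
    dsimp only
    rw [← hzz, mul_pow, mul_assoc _ (z ^ j), ← pow_add, Nat.add_sub_cancel' hjn.le]
  have hpoly : Differentiable ℂ fun z : ℂ => ((r ^ 2 : ℝ) : ℂ) ^ j * z ^ (n - j) := by fun_prop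
  have hd' : DiffContOnCl ℂ (fun z => ((r ^ 2 : ℝ) : ℂ) ^ j * z ^ (n - j) * h z) (ball 0 |r|) :=
    hpoly.diffContOnCl.smul hd
  rw [Real.circleAverage_congr_sphere hsphere, hd'.circleAverage]
  simp [zero_pow (Nat.sub_ne_zero_of_lt hjn)]

theorem setIntegral_ball_conj_pow_mul_pow_mul_eq_zero {h : ℂ → ℂ} {R : ℝ}
    (hd : DifferentiableOn ℂ h (ball 0 R)) (hi : IntegrableOn h (ball 0 R))
    {j n : ℕ} (hjn : j < n) :
    ∫ ζ in ball (0 : ℂ) R, (starRingEnd ℂ) ζ ^ j * ζ ^ n * h ζ = 0 := by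
  set φ : ℂ → ℂ := fun ζ => (starRingEnd ℂ) ζ ^ j * ζ ^ n * h ζ
  have hmon : Continuous fun ζ : ℂ => (starRingEnd ℂ) ζ ^ j * ζ ^ n := by fun_prop
  have hφm : StronglyMeasurable ((ball 0 R).indicator φ) := by
    classical
    rw [← piecewise_eq_indicator]
    exact ((hmon.continuousOn.mul hd.continuousOn).measurable_piecewise continuousOn_const
      measurableSet_ball).stronglyMeasurable
  have hφi : Integrable ((ball 0 R).indicator φ) :=
    (integrable_indicator_iff measurableSet_ball).2 <| hi.continuousOn_mul_of_subset
      hmon.continuousOn (isCompact_closedBall 0 R) measurableSet_ball ball_subset_closedBall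
  have hpolar := Complex.integrableOn_polarCoord_target hφm hφi
  rw [polarCoord_target, Measure.volume_eq_prod] at hpolar
  rw [← integral_indicator measurableSet_ball, ← Complex.integral_comp_polarCoord_symm,
    polarCoord_target, Measure.volume_eq_prod, setIntegral_prod _ hpolar]
  refine setIntegral_eq_zero_of_forall_eq_zero fun r (hr : 0 < r) => ?_
  simp only [Complex.polarCoord_symm_eq_circleMap, integral_smul]
  by_cases hrR : r < R
  · have hmem : ∀ θ, circleMap 0 r θ ∈ ball (0 : ℂ) R := fun θ => by
      simpa [abs_of_pos hr] using hrR
    have hr' : |r| < R := by rwa [abs_of_pos hr]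
    have hφ0 : Real.circleAverage φ 0 r = 0 :=
      circleAverage_conj_pow_mul_pow_mul_eq_zero (hd.diffContOnCl_ball (closedBall_subset_ball hr'))
        hjn
    simp only [indicator_of_mem (hmem _), integral_Ioo_neg_pi_pi_circleMap, hφ0, smul_zero]
  · have hmem : ∀ θ, circleMap 0 r θ ∉ ball (0 : ℂ) R := fun θ => by
      simpa [abs_of_pos hr] using hrR
    simp [indicator_of_notMem (hmem _)]

theorem hasSum_succ_mul_pow {𝕜 : Type*} [NormedDivisionRing 𝕜] {z : 𝕜}
    (hz : ‖z‖ < 1) : HasSum (fun n : ℕ => ((n : 𝕜) + 1) * z ^ n) (1 / (1 - z) ^ 2) := by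
  simpa using hasSum_choose_mul_geometric_of_norm_lt_one 1 hz

theorem hasSum_integral_div_one_sub_conj_mul_sq {μ : Measure ℂ} {F : ℂ → ℂ} (hF : Integrable F μ)
    (hμ : ∀ᵐ ζ ∂μ, ‖ζ‖ ≤ 1) {w : ℂ} (hw : ‖w‖ < 1) :
    HasSum (fun n : ℕ => ((n : ℂ) + 1) * w ^ n * ∫ ζ, F ζ * (starRingEnd ℂ) ζ ^ n ∂μ)
      (∫ ζ, F ζ / (1 - (starRingEnd ℂ) ζ * w) ^ 2 ∂μ) := by
  have hS : HasSum (fun n : ℕ => ((n : ℝ) + 1) * ‖w‖ ^ n) (1 / (1 - ‖w‖) ^ 2) :=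
    hasSum_succ_mul_pow (by rwa [norm_norm])
  simp_rw [← integral_const_mul]
  refine hasSum_integral_of_dominated_convergence (fun n ζ => ((n : ℝ) + 1) * ‖w‖ ^ n * ‖F ζ‖)
    (fun n => aestronglyMeasurable_const.mul (hF.aestronglyMeasurable.mul
      (by fun_prop : Continuous fun ζ : ℂ => (starRingEnd ℂ) ζ ^ n).aestronglyMeasurable))
    (fun n => hμ.mono fun ζ hζ => ?_) (ae_of_all _ fun ζ => (hS.mul_right _).summable)
    ?_ (hμ.mono fun ζ hζ => ?_)
  · calc ‖((n : ℂ) + 1) * w ^ n * (F ζ * (starRingEnd ℂ) ζ ^ n)‖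
        = ((n : ℝ) + 1) * ‖w‖ ^ n * (‖F ζ‖ * ‖ζ‖ ^ n) := by
          rw [norm_mul, norm_mul, norm_mul, norm_pow, norm_pow, RCLike.norm_conj,
            ← Nat.cast_succ, Complex.norm_natCast, Nat.cast_succ]
      _ ≤ ((n : ℝ) + 1) * ‖w‖ ^ n * ‖F ζ‖ := by
          gcongr
          exact mul_le_of_le_one_right (norm_nonneg _) (pow_le_one₀ (norm_nonneg _) hζ)
  · simp_rw [tsum_mul_right, hS.tsum_eq]
    exact hF.norm.const_mul _
  · have hζw : ‖(starRingEnd ℂ) ζ * w‖ < 1 := by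
      rw [norm_mul, RCLike.norm_conj]
      nlinarith [norm_nonneg ζ, norm_nonneg w]
    have h := (hasSum_succ_mul_pow hζw).mul_left (F ζ)
    rw [mul_one_div] at h
    exact h.congr_fun fun n => by ring

instance : IsFiniteMeasure σA :=
  have : IsFiniteMeasure (volume.restrict (ball (0 : ℂ) 1)) :=
    isFiniteMeasure_restrict.2 measure_ball_lt_top.ne
  Measure.smul_finite _ (by simp [Real.pi_pos])

theorem ae_norm_le_one_σA : ∀ᵐ ζ ∂σA, ‖ζ‖ ≤ 1 :=
  Measure.ae_smul_measure ((ae_restrict_mem measurableSet_ball).mono fun _ hζ =>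
    (mem_ball_zero_iff.mp hζ).le) _

theorem integrable_σA_iff {F : ℂ → ℂ} : Integrable F σA ↔ IntegrableOn F (ball 0 1) :=
  integrable_smul_measure (by simp) (by simp [Real.pi_pos])

theorem MemAp.integrable {p : ℝ} {g : ℂ → ℂ} (hp : 1 ≤ p) (hg : MemAp p g) : Integrable g σA := by
  have hm : AEStronglyMeasurable g σA :=
    (hg.1.continuousOn.aestronglyMeasurable measurableSet_ball).smul_measure _
  have hLp : MemLp g (ENNReal.ofReal p) σA :=
    (integrable_norm_rpow_iff hm (by simp; linarith) ENNReal.ofReal_ne_top).1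
      (by rw [ENNReal.toReal_ofReal (by linarith)]; exact hg.2)
  exact hLp.integrable (by simpa using hp)

theorem integral_σA_conj_pow_mul_pow_mul_eq_zero {h : ℂ → ℂ}
    (hd : DifferentiableOn ℂ h (ball 0 1)) (hi : Integrable h σA) {j n : ℕ} (hjn : j < n) :
    ∫ ζ, (starRingEnd ℂ) ζ ^ j * ζ ^ n * h ζ ∂σA = 0 := by
  rw [σA, integral_smul_measure,
    setIntegral_ball_conj_pow_mul_pow_mul_eq_zero hd (integrable_σA_iff.1 hi) hjn, smul_zero]

theorem integral_σA_eval_mul_conj_mul_conj_pow_eq_zero {f : Polynomial ℂ} {N : ℕ}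
    (hf : f.degree ≤ N) {g : ℂ → ℂ} (hd : DifferentiableOn ℂ g (ball 0 1)) (hi : Integrable g σA)
    {n : ℕ} (hn : N < n) :
    ∫ ζ, f.eval ζ * (starRingEnd ℂ) (g ζ) * (starRingEnd ℂ) ζ ^ n ∂σA = 0 := by
  have hexpand : ∀ ζ, (starRingEnd ℂ) (f.eval ζ * (starRingEnd ℂ) (g ζ) * (starRingEnd ℂ) ζ ^ n)
      = ∑ i ∈ Finset.range (N + 1),
          (starRingEnd ℂ) (f.coeff i) * ((starRingEnd ℂ) ζ ^ i * ζ ^ n * g ζ) := fun ζ => by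
    rw [f.eval_eq_sum_range' (Nat.lt_succ_of_le (Polynomial.natDegree_le_of_degree_le hf))]
    simp only [map_mul, map_pow, map_sum, conj_conj, Finset.sum_mul]
    exact Finset.sum_congr rfl fun i _ => by ring
  have hint : ∀ i, Integrable (fun ζ => (starRingEnd ℂ) ζ ^ i * ζ ^ n * g ζ) σA := fun i =>
    hi.bdd_mul (by fun_prop) (ae_norm_le_one_σA.mono fun ζ hζ => by
      simpa [norm_pow] using mul_le_one₀ (pow_le_one₀ (norm_nonneg ζ) hζ) (by positivity)
        (pow_le_one₀ (norm_nonneg ζ) hζ))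
  rw [← map_eq_zero (starRingEnd ℂ), ← integral_conj]
  simp_rw [hexpand]
  rw [integral_finsetSum _ fun i _ => (hint i).const_mul _]
  refine Finset.sum_eq_zero fun i hiN => ?_
  rw [integral_const_mul, integral_σA_conj_pow_mul_pow_mul_eq_zero hd hi
    (by have := Finset.mem_range.1 hiN; omega), mul_zero]

/-- If `f` is a polynomial of degree at most `N` and `g ∈ A^p`, then
`𝒫(f conj g)` is a polynomial of degree at most `N`. -/
theorem stmt13 (p : ℝ) (hp : 1 < p) (N : ℕ)
    (f : Polynomial ℂ) (hf : f.degree ≤ (N : ℕ))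
    (g : ℂ → ℂ) (hg : MemAp p g) :
    ∃ Q : Polynomial ℂ, Q.degree ≤ (N : ℕ) ∧ ∀ w ∈ ball (0:ℂ) 1,
      bergmanProj (fun z => f.eval z * (starRingEnd ℂ) (g z)) w = Q.eval w := by
  have hgi : Integrable g σA := hg.integrable hp.le
  obtain ⟨C, hC⟩ := (isCompact_closedBall (0 : ℂ) 1).exists_bound_of_continuousOn
    f.continuous.continuousOn
  have hF : Integrable (fun z => f.eval z * (starRingEnd ℂ) (g z)) σA :=
    ((RCLike.conjCLE (K := ℂ)).toContinuousLinearMap.integrable_comp hgi).bdd_mul (c := C)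
      f.continuous.aestronglyMeasurable
      (ae_norm_le_one_σA.mono fun ζ hζ => hC ζ (mem_closedBall_zero_iff.2 hζ))
  set M : ℕ → ℂ := fun n => ∫ ζ, f.eval ζ * (starRingEnd ℂ) (g ζ) * (starRingEnd ℂ) ζ ^ n ∂σA
  refine ⟨∑ n ∈ Finset.range (N + 1), Polynomial.C (((n : ℂ) + 1) * M n) * Polynomial.X ^ n,
    ?_, fun w hw => ?_⟩
  · refine (Polynomial.degree_sum_le _ _).trans (Finset.sup_le fun n hn => ?_)
    exact (Polynomial.degree_C_mul_X_pow_le n _).trans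
      (by exact_mod_cast Nat.lt_succ_iff.mp (Finset.mem_range.mp hn))
  have hseries := hasSum_integral_div_one_sub_conj_mul_sq hF ae_norm_le_one_σA
    (mem_ball_zero_iff.mp hw)
  have hfinite : HasSum (fun n : ℕ => ((n : ℂ) + 1) * w ^ n * M n)
      (∑ n ∈ Finset.range (N + 1), ((n : ℂ) + 1) * w ^ n * M n) :=
    hasSum_sum_of_ne_finset_zero fun n hn => by
      rw [show M n = 0 from integral_σA_eval_mul_conj_mul_conj_pow_eq_zero hf hg.1 hgi
        (by simpa using hn), mul_zero]
  rw [bergmanProj, hseries.unique hfinite, Polynomial.eval_finsetSum]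
  simp only [Polynomial.eval_mul, Polynomial.eval_C, Polynomial.eval_pow, Polynomial.eval_X]
  exact Finset.sum_congr rfl fun n _ => by ring
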